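/- For Δ0 formulas φ and ψ, φ entails ψ over all (possibly non-extensional) general models if and only if every nested relation (extensional well-typed model) satisfying φ also satisfies ψ. -/

import Mathlib

inductive NTy : Type
  | ur : NTy
  | unit : NTy
  | prod : NTy → NTy → NTy
  | set : NTy → NTy
deriving DecidableEq

def NObj (U : Type) : NTy → Type
  | .ur => U
  | .unit => Unit
  | .prod a b => NObj U a × NObj U b
  | .set a => Set (NObj U a)

def NObj.asSet {U : Type} {T : NTy} (s : NObj U (NTy.set T)) : Set (NObj U T) := s

def Env (U : Type) (Γ : List NTy) : Type := (i : Fin Γ.length) → NObj U (Γ.get i)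

def Env.nil {U : Type} : Env U [] := fun i => i.elim0

def Env.cons {U : Type} {T : NTy} {Γ : List NTy} (x : NObj U T) (ρ : Env U Γ) :
    Env U (T :: Γ) := fun i =>
  Fin.cases (motive := fun i => NObj U ((T :: Γ).get i)) x (fun j => ρ j) i

inductive Tm : List NTy → NTy → Type
  | var {Γ} (i : Fin Γ.length) : Tm Γ (Γ.get i)
  | unit {Γ} : Tm Γ NTy.unit
  | pair {Γ a b} : Tm Γ a → Tm Γ b → Tm Γ (NTy.prod a b)
  | fst {Γ a b} : Tm Γ (NTy.prod a b) → Tm Γ a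
  | snd {Γ a b} : Tm Γ (NTy.prod a b) → Tm Γ b

def Tm.eval {U : Type} : ∀ {Γ T}, Tm Γ T → Env U Γ → NObj U T
  | _, _, .var i, ρ => ρ i
  | _, _, .unit, _ => ()
  | _, _, .pair s t, ρ => (s.eval ρ, t.eval ρ)
  | _, _, .fst t, ρ => (t.eval ρ).1
  | _, _, .snd t, ρ => (t.eval ρ).2

inductive D0 : List NTy → Type
  | eq {Γ} : Tm Γ NTy.ur → Tm Γ NTy.ur → D0 Γ
  | ne {Γ} : Tm Γ NTy.ur → Tm Γ NTy.ur → D0 Γ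
  | tru {Γ} : D0 Γ
  | fls {Γ} : D0 Γ
  | and {Γ} : D0 Γ → D0 Γ → D0 Γ
  | or {Γ} : D0 Γ → D0 Γ → D0 Γ
  | all {Γ T} : Tm Γ (NTy.set T) → D0 (T :: Γ) → D0 Γ
  | ex {Γ T} : Tm Γ (NTy.set T) → D0 (T :: Γ) → D0 Γ

def D0.Sat {U : Type} : ∀ {Γ}, D0 Γ → Env U Γ → Prop
  | _, .eq s t, ρ => s.eval ρ = t.eval ρ
  | _, .ne s t, ρ => s.eval ρ ≠ t.eval ρ
  | _, .tru, _ => True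
  | _, .fls, _ => False
  | _, .and φ ψ, ρ => φ.Sat ρ ∧ ψ.Sat ρ
  | _, .or φ ψ, ρ => φ.Sat ρ ∨ ψ.Sat ρ
  | _, .all t φ, ρ => ∀ x ∈ NObj.asSet (t.eval ρ), φ.Sat (Env.cons x ρ)
  | _, .ex t φ, ρ => ∃ x ∈ NObj.asSet (t.eval ρ), φ.Sat (Env.cons x ρ)

def Tm.fv : ∀ {Γ T}, Tm Γ T → Finset (Fin Γ.length)
  | _, _, .var i => {i}
  | _, _, .unit => ∅
  | _, _, .pair s t => s.fv ∪ t.fv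
  | _, _, .fst t => t.fv
  | _, _, .snd t => t.fv

def lowerFv {n : ℕ} (s : Finset (Fin (n + 1))) : Finset (Fin n) :=
  Finset.univ.filter (fun j => j.succ ∈ s)

def D0.fv : ∀ {Γ}, D0 Γ → Finset (Fin Γ.length)
  | _, .eq s t => s.fv ∪ t.fv
  | _, .ne s t => s.fv ∪ t.fv
  | _, .tru => ∅
  | _, .fls => ∅
  | _, .and φ ψ => φ.fv ∪ ψ.fv
  | _, .or φ ψ => φ.fv ∪ ψ.fv
  | _, .all t φ => t.fv ∪ lowerFv φ.fv
  | _, .ex t φ => t.fv ∪ lowerFv φ.fv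

/-- A *general model* of the nested relational vocabulary: a multi-sorted structure with a
sort for each type, typed membership relations, tupling and projections, a unit element,
subject only to the sanity axiom that projections commute with tupling. -/
structure GModel : Type 1 where
  carrier : NTy → Type
  mem : ∀ {T : NTy}, carrier T → carrier (NTy.set T) → Prop
  mkPair : ∀ {a b : NTy}, carrier a → carrier b → carrier (NTy.prod a b)
  pr1 : ∀ {a b : NTy}, carrier (NTy.prod a b) → carrier a
  pr2 : ∀ {a b : NTy}, carrier (NTy.prod a b) → carrier b
  star : carrier NTy.unit
  pr1_mkPair : ∀ {a b : NTy} (x : carrier a) (y : carrier b), pr1 (mkPair x y) = x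
  pr2_mkPair : ∀ {a b : NTy} (x : carrier a) (y : carrier b), pr2 (mkPair x y) = y

def GEnv (M : GModel) (Γ : List NTy) : Type := (i : Fin Γ.length) → M.carrier (Γ.get i)

def GEnv.nil {M : GModel} : GEnv M [] := fun i => i.elim0

def GEnv.cons {M : GModel} {T : NTy} {Γ : List NTy} (x : M.carrier T) (ρ : GEnv M Γ) :
    GEnv M (T :: Γ) := fun i =>
  Fin.cases (motive := fun i => M.carrier ((T :: Γ).get i)) x (fun j => ρ j) i

def Tm.gEval {M : GModel} : ∀ {Γ T}, Tm Γ T → GEnv M Γ → M.carrier T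
  | _, _, .var i, ρ => ρ i
  | _, _, .unit, _ => M.star
  | _, _, .pair s t, ρ => M.mkPair (s.gEval ρ) (t.gEval ρ)
  | _, _, .fst t, ρ => M.pr1 (t.gEval ρ)
  | _, _, .snd t, ρ => M.pr2 (t.gEval ρ)

/-- Satisfaction of a Δ₀ formula in a general model. -/
def D0.GSat {M : GModel} : ∀ {Γ}, D0 Γ → GEnv M Γ → Prop
  | _, .eq s t, ρ => s.gEval ρ = t.gEval ρ
  | _, .ne s t, ρ => s.gEval ρ ≠ t.gEval ρ
  | _, .tru, _ => True
  | _, .fls, _ => False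
  | _, .and φ ψ, ρ => φ.GSat ρ ∧ ψ.GSat ρ
  | _, .or φ ψ, ρ => φ.GSat ρ ∨ ψ.GSat ρ
  | _, .all t φ, ρ => ∀ x, M.mem x (t.gEval ρ) → φ.GSat (GEnv.cons x ρ)
  | _, .ex t φ, ρ => ∃ x, M.mem x (t.gEval ρ) ∧ φ.GSat (GEnv.cons x ρ)

/-! Every nested relation is a general model. Conversely, a general model collapses onto a nested
relation over its urelement sort: a set element is sent to the set of collapses of its members, a
pair to the pair of collapses of its projections. Because projections commute with tupling, the
collapse commutes with term evaluation, and since Δ₀ formulas only compare urelements and quantify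
over members of terms, it preserves satisfaction. A nested relation is its own collapse. -/

namespace GModel

def nested (U : Type) : GModel where
  carrier := NObj U
  mem x s := x ∈ NObj.asSet s
  mkPair := Prod.mk
  pr1 := Prod.fst
  pr2 := Prod.snd
  star := ()
  pr1_mkPair _ _ := rfl
  pr2_mkPair _ _ := rfl

def collapse (M : GModel) : ∀ T : NTy, M.carrier T → NObj (M.carrier .ur) T
  | .ur, x => x
  | .unit, _ => ()
  | .prod _ _, x => (M.collapse _ (M.pr1 x), M.collapse _ (M.pr2 x))
  | .set _, s => {y | ∃ x, M.mem x s ∧ M.collapse _ x = y}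

def collapseEnv (M : GModel) {Γ : List NTy} (ρ : GEnv M Γ) : Env (M.carrier .ur) Γ :=
  fun i => M.collapse _ (ρ i)

theorem collapseEnv_cons (M : GModel) {T : NTy} {Γ : List NTy} (x : M.carrier T)
    (ρ : GEnv M Γ) :
    M.collapseEnv (GEnv.cons x ρ) = Env.cons (M.collapse T x) (M.collapseEnv ρ) := by
  funext i
  cases i using Fin.cases <;> rfl

theorem collapse_nested {U : Type} : ∀ (T : NTy) (x : NObj U T), (nested U).collapse T x = x
  | .ur, _ => rfl
  | .unit, _ => rfl
  | .prod a b, x => Prod.ext (collapse_nested a x.1) (collapse_nested b x.2)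
  | .set a, _ => Set.ext fun y =>
      ⟨fun ⟨x, hx, hxy⟩ => (collapse_nested a x).symm.trans hxy ▸ hx,
        fun hy => ⟨y, hy, collapse_nested a y⟩⟩

theorem collapseEnv_nested {U : Type} {Γ : List NTy} (ρ : Env U Γ) :
    (nested U).collapseEnv ρ = ρ :=
  funext fun i => collapse_nested _ (ρ i)

end GModel

open GModel

theorem Tm.eval_collapseEnv (M : GModel) : ∀ {Γ T} (t : Tm Γ T) (ρ : GEnv M Γ),
    t.eval (M.collapseEnv ρ) = M.collapse T (t.gEval ρ)
  | _, _, .var _, _ => by simp only [Tm.eval, Tm.gEval, collapseEnv]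
  | _, _, .unit, _ => rfl
  | _, _, .pair s t, ρ => by
      simp only [Tm.eval, Tm.gEval, collapse, M.pr1_mkPair, M.pr2_mkPair,
        s.eval_collapseEnv M ρ, t.eval_collapseEnv M ρ]
      rfl
  | _, _, .fst t, ρ => by simp only [Tm.eval, Tm.gEval, t.eval_collapseEnv M ρ, collapse]
  | _, _, .snd t, ρ => by simp only [Tm.eval, Tm.gEval, t.eval_collapseEnv M ρ, collapse]

theorem D0.gSat_iff_sat_collapseEnv (M : GModel) : ∀ {Γ} (φ : D0 Γ) (ρ : GEnv M Γ),
    φ.GSat ρ ↔ φ.Sat (M.collapseEnv ρ)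
  | _, .eq s t, ρ => by
      simp only [D0.GSat, D0.Sat, s.eval_collapseEnv, t.eval_collapseEnv]; rfl
  | _, .ne s t, ρ => by
      simp only [D0.GSat, D0.Sat, s.eval_collapseEnv, t.eval_collapseEnv]; rfl
  | _, .tru, _ => Iff.rfl
  | _, .fls, _ => Iff.rfl
  | _, .and φ ψ, ρ => and_congr (φ.gSat_iff_sat_collapseEnv M ρ) (ψ.gSat_iff_sat_collapseEnv M ρ)
  | _, .or φ ψ, ρ => or_congr (φ.gSat_iff_sat_collapseEnv M ρ) (ψ.gSat_iff_sat_collapseEnv M ρ)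
  | _, .all t φ, ρ => by
      simp only [D0.GSat, D0.Sat, t.eval_collapseEnv, collapse, NObj.asSet, Set.mem_ofPred_eq,
        forall_exists_index, and_imp, forall_apply_eq_imp_iff₂, ← collapseEnv_cons,
        φ.gSat_iff_sat_collapseEnv]
  | _, .ex t φ, ρ => by
      simp only [D0.GSat, D0.Sat, t.eval_collapseEnv, collapse, NObj.asSet, Set.mem_ofPred_eq,
        exists_exists_and_eq_and, ← collapseEnv_cons, φ.gSat_iff_sat_collapseEnv]

theorem D0.gSat_nested_iff {U : Type} {Γ : List NTy} (φ : D0 Γ) (ρ : GEnv (nested U) Γ) :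
    φ.GSat ρ ↔ φ.Sat ρ := by
  rw [φ.gSat_iff_sat_collapseEnv]
  exact iff_of_eq (congrArg φ.Sat (collapseEnv_nested ρ))

/-- For Δ₀ formulas `φ` and `ψ`, entailment over all general (possibly non-extensional)
models coincides with entailment over all nested relational (extensional, well-typed)
instances. -/
theorem d0_general_entailment_iff_nested {Γ : List NTy} (φ ψ : D0 Γ) :
    (∀ (M : GModel) (ρ : GEnv M Γ), φ.GSat ρ → ψ.GSat ρ) ↔
    (∀ (U : Type) (ρ : Env U Γ), φ.Sat ρ → ψ.Sat ρ) := by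
  refine ⟨fun h U ρ hφ => ?_, fun h M ρ hφ => ?_⟩
  · exact (ψ.gSat_nested_iff ρ).mp (h (nested U) ρ ((φ.gSat_nested_iff ρ).mpr hφ))
  · rw [D0.gSat_iff_sat_collapseEnv] at hφ ⊢
    exact h _ _ hφ
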